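/- As N → ∞, the critical value λ_c(N) converges to 1/2, the critical value of the branching random walk on the whole line ℤ. -/

import Mathlib

open Matrix Polynomial Filter

/-- The (N+1)×(N+1) matrix A_N(λ): diagonal −1, entry (0,1) equal to 2λ,
entries λ on the other super/sub-diagonal positions, 0 elsewhere. -/
noncomputable def matA (lam : ℝ) (N : ℕ) : Matrix (Fin (N + 1)) (Fin (N + 1)) ℝ :=
  Matrix.of fun j k =>
    if j = k then -1
    else if (j : ℕ) = 0 ∧ (k : ℕ) = 1 then 2 * lam
    else if (j : ℕ) + 1 = (k : ℕ) ∨ (k : ℕ) + 1 = (j : ℕ) then lam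
    else 0

/-- The (N+1)×(N+1) matrix C_N: zero diagonal, entry (0,1) equal to 2,
entries 1 on the other super/sub-diagonal positions, 0 elsewhere;
so that A_N(λ) = −I + λ·C_N. -/
noncomputable def matC (N : ℕ) : Matrix (Fin (N + 1)) (Fin (N + 1)) ℝ :=
  Matrix.of fun j k =>
    if j = k then 0
    else if (j : ℕ) = 0 ∧ (k : ℕ) = 1 then 2
    else if (j : ℕ) + 1 = (k : ℕ) ∨ (k : ℕ) + 1 = (j : ℕ) then 1
    else 0

/-- The critical value λ_c(N) = inf {λ > 0 : det(−A_N(λ)) = 0}. -/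
noncomputable def lamCrit (N : ℕ) : ℝ :=
  sInf {lam : ℝ | 0 < lam ∧ (-(matA lam N)).det = 0}
/-!
Write `-A_N(λ) = 1 - λ C_N`. Every row of the nonnegative matrix `C_N` sums to at most `2`, so for
`|λ| < 1/2` the matrix `-A_N(λ)` is strictly diagonally dominant and, by Gershgorin, invertible:
hence `λ_c(N) ≥ 1/2`. Conversely, for `θ = π / (2(N+1))` the vector `(cos (kθ))_k` is an
eigenvector of `C_N` with eigenvalue `2 cos θ` (the doubled entry in row `0` matches the evenness
of `cos`, and row `N` works because `cos ((N+1)θ) = 0`), so `λ_c(N) ≤ 1 / (2 cos θ) → 1/2`.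
-/

open Real Finset

lemma neg_matA_eq (lam : ℝ) (N : ℕ) : -matA lam N = 1 - lam • matC N := by
  ext j k
  simp only [matA, matC, Matrix.neg_apply, Matrix.sub_apply, Matrix.one_apply, Matrix.smul_apply,
    of_apply, smul_eq_mul]
  split_ifs <;> ring

lemma matC_apply (N : ℕ) (j k : Fin (N + 1)) :
    matC N j k = (if (k : ℕ) = j + 1 then if (j : ℕ) = 0 then 2 else 1 else 0)
      + if (j : ℕ) = k + 1 then 1 else 0 := by
  rcases j with ⟨j, hj⟩
  rcases k with ⟨k, hk⟩
  simp only [matC, of_apply, Fin.mk.injEq]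
  split_ifs <;> first | omega | norm_num

lemma matC_nonneg (N : ℕ) (j k : Fin (N + 1)) : 0 ≤ matC N j k := by
  rw [matC_apply]
  split_ifs <;> norm_num

lemma matC_mulVec_apply (N : ℕ) (g : ℕ → ℝ) (j : Fin (N + 1)) :
    (matC N *ᵥ fun k => g k) j
      = (if (j : ℕ) < N then (if (j : ℕ) = 0 then 2 else 1) * g (j + 1) else 0)
        + if 1 ≤ (j : ℕ) then g (j - 1) else 0 := by
  obtain ⟨j, hj⟩ := j
  simp only [mulVec, dotProduct, matC_apply, add_mul, sum_add_distrib, ite_mul, zero_mul, one_mul]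
  rw [Fin.sum_univ_eq_sum_range
      (fun k => if k = j + 1 then if j = 0 then 2 * g k else g k else 0),
    Fin.sum_univ_eq_sum_range (fun k => if j = k + 1 then g k else 0), sum_ite_eq']
  cases j with
  | zero => simp
  | succ i => simp [show i < N + 1 by omega]

lemma sum_matC_row_le_two (N : ℕ) (j : Fin (N + 1)) : ∑ k, matC N j k ≤ 2 := by
  have hrow := matC_mulVec_apply N (fun _ => 1) j
  simp only [mulVec, dotProduct, mul_one] at hrow
  rw [hrow]
  split_ifs <;> first | omega | norm_num

lemma det_neg_matA_ne_zero {N : ℕ} {lam : ℝ} (hlam : |lam| < 1 / 2) : (-matA lam N).det ≠ 0 := by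
  refine det_ne_zero_of_sum_row_lt_diag fun j => ?_
  have hoff : ∀ k ∈ univ.erase j, ‖(-matA lam N) j k‖ = |lam| * matC N j k := by
    intro k hk
    rw [neg_matA_eq, Matrix.sub_apply, Matrix.one_apply_ne (ne_of_mem_erase hk).symm,
      Matrix.smul_apply, smul_eq_mul, zero_sub, norm_neg, Real.norm_eq_abs, abs_mul,
      abs_of_nonneg (matC_nonneg N j k)]
  have hdiag : ‖(-matA lam N) j j‖ = 1 := by
    simp [matA]
  calc ∑ k ∈ univ.erase j, ‖(-matA lam N) j k‖ = |lam| * ∑ k ∈ univ.erase j, matC N j k := by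
        rw [sum_congr rfl hoff, mul_sum]
    _ ≤ |lam| * ∑ k, matC N j k := by
        gcongr
        · exact fun k _ _ => matC_nonneg N j k
        · exact erase_subset j univ
    _ ≤ |lam| * 2 := by gcongr; exact sum_matC_row_le_two N j
    _ < ‖(-matA lam N) j j‖ := by rw [hdiag]; linarith

lemma matC_mulVec_cos {N : ℕ} {θ : ℝ} (hθ : cos ((N + 1) * θ) = 0) :
    matC N *ᵥ (fun k : Fin (N + 1) => cos (k * θ))
      = (2 * cos θ) • fun k : Fin (N + 1) => cos (k * θ) := by
  have key (x : ℝ) : cos (x + θ) + cos (x - θ) = 2 * cos θ * cos x := by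
    rw [cos_add, cos_sub]; ring
  ext ⟨j, hj⟩
  rw [matC_mulVec_apply N (fun m => cos (m * θ))]
  simp only [Pi.smul_apply, smul_eq_mul]
  cases j with
  | zero =>
    rcases N.eq_zero_or_pos with rfl | hN
    · simp_all
    · simp [hN]
  | succ i =>
    have hkey := key ((i + 1 : ℕ) * θ)
    rw [show ((i + 1 : ℕ) : ℝ) * θ + θ = ((i + 1 + 1 : ℕ) : ℝ) * θ by push_cast; ring,
      show ((i + 1 : ℕ) : ℝ) * θ - θ = (i : ℝ) * θ by push_cast; ring] at hkey
    rw [if_neg i.succ_ne_zero, if_pos (Nat.le_add_left 1 i), Nat.add_sub_cancel, one_mul]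
    split_ifs with hi
    · exact hkey
    · obtain rfl : N = i + 1 := by omega
      push_cast at hθ hkey ⊢
      linarith

lemma det_neg_matA_eq_zero {N : ℕ} {θ lam : ℝ} (hθ : cos ((N + 1) * θ) = 0)
    (hlam : lam * (2 * cos θ) = 1) : (-matA lam N).det = 0 := by
  rw [← exists_mulVec_eq_zero_iff]
  refine ⟨fun k : Fin (N + 1) => cos (k * θ), fun h => by simpa using congrFun h 0, ?_⟩
  rw [neg_matA_eq, sub_mulVec, one_mulVec, smul_mulVec, matC_mulVec_cos hθ, smul_smul, hlam,
    one_smul, sub_self]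

lemma half_le_lamCrit {N : ℕ} (hne : {lam : ℝ | 0 < lam ∧ (-(matA lam N)).det = 0}.Nonempty) :
    1 / 2 ≤ lamCrit N := by
  refine le_csInf hne fun lam ⟨hpos, hdet⟩ => ?_
  by_contra! hlt
  exact det_neg_matA_ne_zero (by rwa [abs_of_pos hpos]) hdet

lemma lamCrit_le {N : ℕ} {lam : ℝ} (hpos : 0 < lam) (hdet : (-(matA lam N)).det = 0) :
    lamCrit N ≤ lam :=
  csInf_le ⟨0, fun _ h => h.1.le⟩ ⟨hpos, hdet⟩

lemma lamCrit_mem_Icc {N : ℕ} (hN : 1 ≤ N) :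
    lamCrit N ∈ Set.Icc (1 / 2) (2 * cos (π / (2 * (N + 1))))⁻¹ := by
  set θ := π / (2 * (N + 1))
  have hθ : cos ((N + 1) * θ) = 0 := by
    rw [show (N + 1) * θ = π / 2 by simp only [θ]; field_simp]
    exact cos_pi_div_two
  have hcos : 0 < cos θ := by
    have hθpos : 0 < θ := by positivity
    have hθlt : θ < π / 2 :=
      div_lt_div_of_pos_left pi_pos two_pos (by norm_cast; omega)
    exact cos_pos_of_mem_Ioo ⟨by linarith, hθlt⟩
  have hdet := det_neg_matA_eq_zero (lam := (2 * cos θ)⁻¹) hθ (inv_mul_cancel₀ (by positivity))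
  have hpos : 0 < (2 * cos θ)⁻¹ := by positivity
  exact ⟨half_le_lamCrit ⟨_, hpos, hdet⟩, lamCrit_le hpos hdet⟩

/-- The critical value λ_c(N) converges to 1/2 as N → ∞. -/
theorem lamCrit_tendsto_half :
    Tendsto (fun N : ℕ => lamCrit N) atTop (nhds (1 / 2 : ℝ)) := by
  have hθ : Tendsto (fun N : ℕ => π / (2 * ((N : ℝ) + 1))) atTop (nhds 0) := by
    refine tendsto_const_nhds.div_atTop (Tendsto.const_mul_atTop two_pos ?_)
    exact tendsto_atTop_add_const_right _ 1 tendsto_natCast_atTop_atTop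
  have hbound :
      Tendsto (fun N : ℕ => (2 * cos (π / (2 * ((N : ℝ) + 1))))⁻¹) atTop (nhds (1 / 2)) := by
    have hcont : ContinuousAt (fun x => (2 * cos x)⁻¹) 0 :=
      ((continuous_const.mul continuous_cos).continuousAt).inv₀ (by simp)
    simpa only [Function.comp_def, cos_zero, mul_one, one_div] using hcont.tendsto.comp hθ
  refine tendsto_of_tendsto_of_tendsto_of_le_of_le' tendsto_const_nhds hbound ?_ ?_ <;>
    filter_upwards [eventually_ge_atTop 1] with N hN
  exacts [(lamCrit_mem_Icc hN).1, (lamCrit_mem_Icc hN).2]
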